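/- Let Φ be an irreducible root system and suppose α, β ∈ Φ are roots with (α,α) = (β,β) (equal length). Then α and β lie in the same orbit of the Weyl group W. -/

import Mathlib

variable {V : Type*} [NormedAddCommGroup V] [InnerProductSpace ℝ V]

/-- The Cartan pairing `⟨β, α⟩ = 2(β,α)/(α,α)`. -/
noncomputable def pairingR (β α : V) : ℝ := 2 * (inner ℝ β α : ℝ) / (inner ℝ α α : ℝ)

/-- The reflection in `α`, `v ↦ v − ⟨v,α⟩α` (junk value: the identity, if `α = 0`). -/
noncomputable def rfln (α : V) : V ≃ₗ[ℝ] V :=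
  if h : (inner ℝ α α : ℝ) ≠ 0 then
    Module.reflection (f := (2 / (inner ℝ α α : ℝ)) • innerₛₗ ℝ α) (x := α)
      (by simp only [LinearMap.smul_apply, innerₛₗ_apply_apply, smul_eq_mul]; field_simp)
  else LinearEquiv.refl ℝ V

/-- `Φ` is a (reduced, crystallographic) root system. -/
structure IsRootSystem (Φ : Finset V) : Prop where
  ne_zero : ∀ α ∈ Φ, α ≠ 0
  reduced : ∀ α ∈ Φ, ∀ t : ℝ, t • α ∈ Φ → t = 1 ∨ t = -1
  reflect : ∀ α ∈ Φ, ∀ β ∈ Φ, β - pairingR β α • α ∈ Φ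
  crystal : ∀ α ∈ Φ, ∀ β ∈ Φ, ∃ n : ℤ, pairingR β α = (n : ℝ)

/-- `α` is a positive root with respect to the simple system `Δ`. -/
def IsPos (Φ Δ : Finset V) (α : V) : Prop :=
  α ∈ Φ ∧ ∃ c : V → ℝ, (∀ b, 0 ≤ c b) ∧ α = ∑ b ∈ Δ, c b • b

/-- `Δ` is a base (set of simple roots) for `Φ`. -/
structure IsBase (Φ Δ : Finset V) : Prop where
  subset : Δ ⊆ Φ
  indep : LinearIndependent ℝ (fun b : ↥(Δ : Set V) => (b : V))
  pos_or_neg : ∀ α ∈ Φ, IsPos Φ Δ α ∨ IsPos Φ Δ (-α)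

/-- The finset of positive roots. -/
noncomputable def posF (Φ Δ : Finset V) : Finset V :=
  @Finset.filter _ (IsPos Φ Δ) (Classical.decPred _) Φ

/-- The product of the reflections in the listed roots (the rightmost acts first). -/
noncomputable def wprod (l : List V) : V ≃ₗ[ℝ] V := (l.map rfln).prod

/-- `Φ` is irreducible: it admits no partition into two nonempty mutually
orthogonal subsets. -/
def IsIrred (Φ : Finset V) : Prop :=
  (Φ : Set V).Nonempty ∧ ∀ s t : Set V, (Φ : Set V) = s ∪ t → Disjoint s t →
    (∀ a ∈ s, ∀ b ∈ t, (inner ℝ a b : ℝ) = 0) → s = ∅ ∨ t = ∅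

/-!
Let `U` be the span of the Weyl orbit of `α`. A root `γ` with `(δ, γ) ≠ 0` for some `δ` in the
orbit lies in `U`, being a multiple of `δ - s_γ δ`; every other root is orthogonal to `U`.
Irreducibility therefore puts all roots, in particular `β`, into `U`, so `(δ, β) > 0` for some
`δ` in the orbit (which is closed under negation). If `δ ≠ β`, equal lengths force the Cartan
integer `⟨δ, β⟩` strictly between `0` and `2`, so `δ - β = s_β δ` is a root, and the reflection
in `δ - β` exchanges the equal-length vectors `δ` and `β`.
-/

open MulAction
open scoped InnerProductSpace

lemma rfln_apply {γ : V} (hγ : γ ≠ 0) (v : V) : rfln γ v = v - pairingR v γ • γ := by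
  rw [rfln, dif_pos (inner_self_ne_zero.2 hγ), Module.reflection_apply]
  simp only [LinearMap.smul_apply, innerₛₗ_apply_apply, smul_eq_mul, pairingR,
    real_inner_comm γ v]
  congr 2
  ring

lemma rfln_inv (γ : V) : (rfln γ)⁻¹ = rfln γ := by
  unfold rfln
  split_ifs <;> rfl

lemma inner_rfln_rfln (γ u v : V) : ⟪rfln γ u, rfln γ v⟫_ℝ = ⟪u, v⟫_ℝ := by
  rcases eq_or_ne γ 0 with rfl | hγ
  · simp [rfln]
  have hγγ : ⟪γ, γ⟫_ℝ ≠ 0 := inner_self_ne_zero.2 hγ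
  simp only [rfln_apply hγ, inner_sub_left, inner_sub_right, real_inner_smul_left,
    real_inner_smul_right, pairingR, real_inner_comm γ u, real_inner_comm γ v]
  field_simp
  ring

lemma rfln_self {γ : V} (hγ : γ ≠ 0) : rfln γ γ = -γ := by
  have hγγ : ⟪γ, γ⟫_ℝ ≠ 0 := inner_self_ne_zero.2 hγ
  rw [rfln_apply hγ, pairingR, mul_div_assoc, div_self hγγ]
  module

lemma rfln_sub_apply_left {a b : V} (hab : a ≠ b) (hlen : ⟪a, a⟫_ℝ = ⟪b, b⟫_ℝ) :
    rfln (a - b) a = b := by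
  have hsub : ⟪a - b, a - b⟫_ℝ ≠ 0 := inner_self_ne_zero.2 (sub_ne_zero.2 hab)
  have hpair : pairingR a (a - b) = 1 := by
    rw [pairingR, div_eq_one_iff_eq hsub]
    simp only [inner_sub_left, inner_sub_right, real_inner_comm a b] at hsub ⊢
    linarith
  rw [rfln_apply (sub_ne_zero.2 hab), hpair, one_smul, sub_sub_cancel]

lemma mem_of_rfln_apply_mem {p : Submodule ℝ V} {γ δ : V} (hδ : δ ∈ p) (hγδ : rfln γ δ ∈ p)
    (hne : ⟪δ, γ⟫_ℝ ≠ 0) : γ ∈ p := by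
  rcases eq_or_ne γ 0 with rfl | hγ
  · exact p.zero_mem
  have hpair : pairingR δ γ ≠ 0 := div_ne_zero (by simpa using hne) (inner_self_ne_zero.2 hγ)
  have hdiff : δ - rfln γ δ = pairingR δ γ • γ := by rw [rfln_apply hγ, sub_sub_cancel]
  exact (p.smul_mem_iff hpair).1 (hdiff ▸ p.sub_mem hδ hγδ)

def weylGroup (Φ : Finset V) : Subgroup (V ≃ₗ[ℝ] V) :=
  Subgroup.closure {s | ∃ γ ∈ Φ, s = rfln γ}

namespace weylGroup

variable {Φ : Finset V}

lemma rfln_mem {γ : V} (hγ : γ ∈ Φ) : rfln γ ∈ weylGroup Φ :=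
  Subgroup.subset_closure ⟨γ, hγ, rfl⟩

lemma inner_apply_apply {w : V ≃ₗ[ℝ] V} (hw : w ∈ weylGroup Φ) (u v : V) :
    ⟪w u, w v⟫_ℝ = ⟪u, v⟫_ℝ := by
  induction hw using Subgroup.closure_induction'' generalizing u v with
  | mem s hs => obtain ⟨γ, -, rfl⟩ := hs; exact inner_rfln_rfln γ u v
  | inv_mem s hs => obtain ⟨γ, -, rfl⟩ := hs; rw [rfln_inv]; exact inner_rfln_rfln γ u v
  | one => rfl
  | mul x y _ _ hx hy => exact (hx (y u) (y v)).trans (hy u v)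

lemma _root_.IsRootSystem.rfln_apply_mem (hΦ : IsRootSystem Φ) {γ v : V} (hγ : γ ∈ Φ)
    (hv : v ∈ Φ) : rfln γ v ∈ Φ := by
  rw [rfln_apply (hΦ.ne_zero γ hγ)]
  exact hΦ.reflect γ hγ v hv

lemma apply_mem (hΦ : IsRootSystem Φ) {w : V ≃ₗ[ℝ] V} (hw : w ∈ weylGroup Φ) {v : V}
    (hv : v ∈ Φ) : w v ∈ Φ := by
  induction hw using Subgroup.closure_induction'' generalizing v with
  | mem s hs => obtain ⟨γ, hγ, rfl⟩ := hs; exact hΦ.rfln_apply_mem hγ hv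
  | inv_mem s hs => obtain ⟨γ, hγ, rfl⟩ := hs; rw [rfln_inv]; exact hΦ.rfln_apply_mem hγ hv
  | one => exact hv
  | mul x y _ _ hx hy => exact hx (hy hv)

lemma mem_orbit_iff {α δ : V} : δ ∈ orbit (weylGroup Φ) α ↔ ∃ w ∈ weylGroup Φ, w α = δ :=
  ⟨fun ⟨w, hw⟩ => ⟨w, w.2, hw⟩, fun ⟨w, hw, h⟩ => ⟨⟨w, hw⟩, h⟩⟩

variable {α δ : V}

lemma rfln_apply_mem_orbit {γ : V} (hγ : γ ∈ Φ) (hδ : δ ∈ orbit (weylGroup Φ) α) :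
    rfln γ δ ∈ orbit (weylGroup Φ) α :=
  mem_orbit_of_mem_orbit (⟨rfln γ, rfln_mem hγ⟩ : weylGroup Φ) hδ

lemma mem_of_mem_orbit (hΦ : IsRootSystem Φ) (hα : α ∈ Φ) (hδ : δ ∈ orbit (weylGroup Φ) α) :
    δ ∈ Φ := by
  obtain ⟨w, hw, rfl⟩ := mem_orbit_iff.1 hδ
  exact apply_mem hΦ hw hα

lemma inner_self_of_mem_orbit (hδ : δ ∈ orbit (weylGroup Φ) α) : ⟪δ, δ⟫_ℝ = ⟪α, α⟫_ℝ := by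
  obtain ⟨w, hw, rfl⟩ := mem_orbit_iff.1 hδ
  exact inner_apply_apply hw α α

lemma neg_mem_orbit (hΦ : IsRootSystem Φ) (hα : α ∈ Φ) (hδ : δ ∈ orbit (weylGroup Φ) α) :
    -δ ∈ orbit (weylGroup Φ) α := by
  have hδΦ := mem_of_mem_orbit hΦ hα hδ
  rw [← rfln_self (hΦ.ne_zero δ hδΦ)]
  exact rfln_apply_mem_orbit hδΦ hδ

end weylGroup

section Orbit

variable {Φ : Finset V} {α : V}

lemma inner_eq_zero_of_notMem_span_orbit {a b : V} (hb : b ∈ Φ)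
    (hbU : b ∉ Submodule.span ℝ (orbit (weylGroup Φ) α))
    (ha : a ∈ Submodule.span ℝ (orbit (weylGroup Φ) α)) : ⟪a, b⟫_ℝ = 0 := by
  have hperp : Submodule.span ℝ (orbit (weylGroup Φ) α) ≤ (ℝ ∙ b)ᗮ := by
    rw [Submodule.span_le]
    intro δ hδ
    rw [SetLike.mem_coe, Submodule.mem_orthogonal_singleton_iff_inner_left]
    by_contra hne
    exact hbU (mem_of_rfln_apply_mem (Submodule.subset_span hδ)
      (Submodule.subset_span (weylGroup.rfln_apply_mem_orbit hb hδ)) hne)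
  exact Submodule.mem_orthogonal_singleton_iff_inner_left.1 (hperp ha)

lemma mem_span_orbit (hirr : IsIrred Φ) (hα : α ∈ Φ) {γ : V} (hγ : γ ∈ Φ) :
    γ ∈ Submodule.span ℝ (orbit (weylGroup Φ) α) := by
  set U := Submodule.span ℝ (orbit (weylGroup Φ) α)
  by_contra hγU
  have hsplit := hirr.2 {x | x ∈ Φ ∧ x ∈ U} {x | x ∈ Φ ∧ x ∉ U}
    (by ext x; by_cases hx : x ∈ U <;> simp [hx])
    (Set.disjoint_left.2 fun x hx hx' => hx'.2 hx.2)
    (fun a ha b hb => inner_eq_zero_of_notMem_span_orbit hb.1 hb.2 ha.2)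
  rcases hsplit with h | h
  · exact h.subset ⟨hα, Submodule.subset_span (mem_orbit_self α)⟩
  · exact h.subset ⟨hγ, hγU⟩

lemma exists_mem_orbit_inner_pos (hΦ : IsRootSystem Φ) (hirr : IsIrred Φ) (hα : α ∈ Φ)
    {β : V} (hβ : β ∈ Φ) : ∃ δ ∈ orbit (weylGroup Φ) α, 0 < ⟪δ, β⟫_ℝ := by
  by_contra! hle
  have horth : ∀ δ ∈ orbit (weylGroup Φ) α, ⟪δ, β⟫_ℝ = 0 := fun δ hδ => by
    have hneg := hle (-δ) (weylGroup.neg_mem_orbit hΦ hα hδ)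
    rw [inner_neg_left] at hneg
    linarith [hle δ hδ]
  have hperp : Submodule.span ℝ (orbit (weylGroup Φ) α) ≤ (ℝ ∙ β)ᗮ := by
    rw [Submodule.span_le]
    exact fun δ hδ => Submodule.mem_orthogonal_singleton_iff_inner_left.2 (horth δ hδ)
  have hββ := Submodule.mem_orthogonal_singleton_iff_inner_left.1
    (hperp (mem_span_orbit hirr hα hβ))
  exact hΦ.ne_zero β hβ (inner_self_eq_zero.1 hββ)

end Orbit

section RankTwo

variable {Φ : Finset V}

lemma sub_mem_of_inner_pos (hΦ : IsRootSystem Φ) {a b : V} (ha : a ∈ Φ) (hb : b ∈ Φ)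
    (hab : a ≠ b) (hlen : ⟪a, a⟫_ℝ = ⟪b, b⟫_ℝ) (hpos : 0 < ⟪a, b⟫_ℝ) : a - b ∈ Φ := by
  have hbb : 0 < ⟪b, b⟫_ℝ := real_inner_self_pos.2 (hΦ.ne_zero b hb)
  have hsub : 0 < ⟪a - b, a - b⟫_ℝ := real_inner_self_pos.2 (sub_ne_zero.2 hab)
  simp only [inner_sub_left, inner_sub_right, real_inner_comm a b] at hsub
  obtain ⟨n, hn⟩ := hΦ.crystal b hb a ha
  have hn_pos : (0 : ℝ) < n := hn ▸ by unfold pairingR; positivity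
  have hn_lt : (n : ℝ) < 2 := hn ▸ by
    rw [pairingR, div_lt_iff₀ hbb]
    linarith
  have hn_one : n = 1 := by
    have : 0 < n ∧ n < 2 := ⟨by exact_mod_cast hn_pos, by exact_mod_cast hn_lt⟩
    omega
  simpa [hn, hn_one] using hΦ.reflect b hb a ha

lemma mem_orbit_of_inner_pos (hΦ : IsRootSystem Φ) {a b : V} (ha : a ∈ Φ) (hb : b ∈ Φ)
    (hlen : ⟪a, a⟫_ℝ = ⟪b, b⟫_ℝ) (hpos : 0 < ⟪a, b⟫_ℝ) : b ∈ orbit (weylGroup Φ) a := by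
  rcases eq_or_ne a b with rfl | hab
  · exact mem_orbit_self a
  rw [weylGroup.mem_orbit_iff]
  exact ⟨rfln (a - b), weylGroup.rfln_mem (sub_mem_of_inner_pos hΦ ha hb hab hlen hpos),
    rfln_sub_apply_left hab hlen⟩

end RankTwo

/-- In an irreducible root system, any two roots of the same length lie in the
same orbit of the Weyl group. -/
theorem stmt17 (Φ : Finset V) (hΦ : IsRootSystem Φ) (hirr : IsIrred Φ)
    (α β : V) (hα : α ∈ Φ) (hβ : β ∈ Φ)
    (hlen : (inner ℝ α α : ℝ) = (inner ℝ β β : ℝ)) :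
    ∃ w ∈ Subgroup.closure {s : V ≃ₗ[ℝ] V | ∃ γ ∈ Φ, s = rfln γ}, w α = β := by
  obtain ⟨δ, hδ, hpos⟩ := exists_mem_orbit_inner_pos hΦ hirr hα hβ
  have hβδ : β ∈ orbit (weylGroup Φ) δ :=
    mem_orbit_of_inner_pos hΦ (weylGroup.mem_of_mem_orbit hΦ hα hδ) hβ
      ((weylGroup.inner_self_of_mem_orbit hδ).trans hlen) hpos
  rw [orbit_eq_iff.2 hδ] at hβδ
  exact weylGroup.mem_orbit_iff.1 hβδ
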